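/- Let V*(θ, Σ, 2) denote the optimal two-step expected revenue. For two ads, V*(θ, Σ, 2) = max over i ∈ {1,2} of (θᵢ + ∫_{−∞}^{kᵢ} pᵢ(x)·θⱼ'(x) dx + ∫_{kᵢ}^{∞} pᵢ(x)·θᵢ'(x) dx), where pᵢ is the predictive density of the first observation when ad i is selected, θᵢ'(x), θⱼ'(x) are the posterior means after observing x, and kᵢ is the threshold at which θᵢ'(kᵢ) = θⱼ'(kᵢ). -/

import Mathlib

/-!
Choosing ad `i` first, `E[X + max (θᵢ'(X), θⱼ'(X))]` with `X ~ N(θᵢ, σᵢ² + σ₀²)` splits as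
`E X = θᵢ` plus the expectation of the maximum. The difference `θᵢ' - θⱼ'` is affine with slope
`(σᵢ² - σᵢⱼ)/(σᵢ² + σ₀²) ≥ 0` and vanishes at `kᵢ`, so the maximum is `θⱼ'` on `(-∞, kᵢ]` and `θᵢ'`
on `[kᵢ, ∞)`; the Gaussian law has no atoms, so counting `kᵢ` in both regions is harmless.
Integrals against `gaussianReal` are finally turned into integrals against its density.
-/

open MeasureTheory

/-- Density of a univariate Gaussian with mean `m` and variance `v`. -/
noncomputable def gpdf (m v x : ℝ) : ℝ :=
  (Real.sqrt (2 * Real.pi * v))⁻¹ * Real.exp (-(x - m) ^ 2 / (2 * v))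

open Set ProbabilityTheory
open scoped NNReal

theorem integral_max_eq_setIntegral_Iic_add_setIntegral_Ici {μ : Measure ℝ} [NullSingletonClass μ]
    {f g : ℝ → ℝ} {k : ℝ} (hf : Integrable f μ) (hg : Integrable g μ) (hmono : Monotone (f - g))
    (hk : f k = g k) :
    ∫ x, max (f x) (g x) ∂μ = (∫ x in Iic k, g x ∂μ) + ∫ x in Ici k, f x ∂μ := by
  have hfg : ∀ x, f x - g x = (f - g) x - (f - g) k := fun x => by simp [hk]
  have hmax : Integrable (fun x => max (f x) (g x)) μ := hf.sup hg
  rw [← intervalIntegral.integral_Iio_add_Ici hmax.integrableOn hmax.integrableOn,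
    ← integral_Iic_eq_integral_Iio]
  congr 1
  · refine setIntegral_congr_fun measurableSet_Iic fun x hx => max_eq_right ?_
    linarith [hfg x, hmono (mem_Iic.1 hx)]
  · refine setIntegral_congr_fun measurableSet_Ici fun x hx => max_eq_left ?_
    linarith [hfg x, hmono (mem_Ici.1 hx)]

theorem integrable_add_mul_sub_div {μ : Measure ℝ} [IsFiniteMeasure μ]
    (hid : Integrable (fun x => x) μ)
    (a b c d : ℝ) : Integrable (fun x => a + b * (x - c) / d) μ :=
  (integrable_const a).add (((hid.sub (integrable_const c)).const_mul b).div_const d)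

theorem monotone_add_mul_sub_div_sub {a a' b b' c d : ℝ} (hd : 0 < d) (hb : b' ≤ b) :
    Monotone ((fun x => a + b * (x - c) / d) - fun x => a' + b' * (x - c) / d) := by
  intro x y hxy
  have h : ∀ z, a + b * (z - c) / d - (a' + b' * (z - c) / d) = a - a' + (b - b') / d * (z - c) :=
    fun z => by ring
  simp only [Pi.sub_apply, h]
  gcongr

theorem integrable_id_gaussianReal (m : ℝ) (v : ℝ≥0) :
    Integrable (fun x => x) (gaussianReal m v) :=
  memLp_one_iff_integrable.1 (memLp_id_gaussianReal 1)

theorem setIntegral_gaussianReal_eq_setIntegral_mul {m : ℝ} {v : ℝ≥0} (hv : v ≠ 0) (f : ℝ → ℝ)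
    {s : Set ℝ} (hs : MeasurableSet s) :
    ∫ x in s, f x ∂gaussianReal m v = ∫ x in s, gaussianPDFReal m v x * f x := by
  rw [← integral_indicator hs, ← integral_indicator hs, integral_gaussianReal_eq_integral_smul hv]
  congr 1 with x
  by_cases hx : x ∈ s <;> simp [hx]

theorem integral_gpdf_mul_add_max {m k : ℝ} {v : ℝ≥0} (hv : v ≠ 0) {f g : ℝ → ℝ}
    (hf : Integrable f (gaussianReal m v)) (hg : Integrable g (gaussianReal m v))
    (hmono : Monotone (f - g)) (hk : f k = g k) :
    ∫ x, gpdf m v x * (x + max (f x) (g x)) =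
      m + ((∫ x in Iic k, gpdf m v x * g x) + ∫ x in Ici k, gpdf m v x * f x) := by
  have := nullSingletonClass_gaussianReal (μ := m) hv
  have hmax : Integrable (fun x => max (f x) (g x)) (gaussianReal m v) := hf.sup hg
  have hmean : ∫ x, gaussianPDFReal m v x * (x + max (f x) (g x)) =
      ∫ x, (x + max (f x) (g x)) ∂gaussianReal m v :=
    (integral_gaussianReal_eq_integral_smul hv).symm
  rw [show gpdf m v = gaussianPDFReal m v from rfl, hmean,
    ← setIntegral_gaussianReal_eq_setIntegral_mul hv _ measurableSet_Iic,
    ← setIntegral_gaussianReal_eq_setIntegral_mul hv _ measurableSet_Ici,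
    integral_add (integrable_id_gaussianReal m v) hmax, integral_id_gaussianReal,
    integral_max_eq_setIntegral_Iic_add_setIntegral_Ici hf hg hmono hk]

/-- Two-step value iteration for two correlated Gaussian ads.  Selecting ad `i` first, the
first observation has predictive density `pᵢ = N(θᵢ, σᵢ² + σ₀²)` and after observing `x` the
posterior means are `θᵢ'(x) = θᵢ + σᵢ²(x − θᵢ)/(σᵢ² + σ₀²)` and
`θⱼ'(x) = θⱼ + σᵢⱼ(x − θᵢ)/(σᵢ² + σ₀²)`; `kᵢ` is the threshold where `θᵢ'(kᵢ) = θⱼ'(kᵢ)`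
(well defined since `σᵢ² > σᵢⱼ`).  The Bellman two-step optimal value
`V*(θ, Σ, 2) = max_i E[Xᵢ + max_j θⱼ'(Xᵢ)]` equals
`max_i (θᵢ + ∫_{−∞}^{kᵢ} pᵢ(x)θⱼ'(x) dx + ∫_{kᵢ}^{∞} pᵢ(x)θᵢ'(x) dx)`. -/
theorem two_step_value_regional_integrals
    (θ1 θ2 σ1sq σ2sq σ12 σ0sq k1 k2 : ℝ)
    (h0 : 0 < σ0sq) (h1 : 0 < σ1sq) (h2 : 0 < σ2sq)
    (hs1 : σ12 < σ1sq) (hs2 : σ12 < σ2sq)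
    (p1 : ℝ → ℝ) (hp1 : p1 = gpdf θ1 (σ1sq + σ0sq))
    (p2 : ℝ → ℝ) (hp2 : p2 = gpdf θ2 (σ2sq + σ0sq))
    (m11 m12 m22 m21 : ℝ → ℝ)
    (hm11 : m11 = fun x => θ1 + σ1sq * (x - θ1) / (σ1sq + σ0sq))
    (hm12 : m12 = fun x => θ2 + σ12 * (x - θ1) / (σ1sq + σ0sq))
    (hm22 : m22 = fun x => θ2 + σ2sq * (x - θ2) / (σ2sq + σ0sq))
    (hm21 : m21 = fun x => θ1 + σ12 * (x - θ2) / (σ2sq + σ0sq))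
    (hk1 : m11 k1 = m12 k1) (hk2 : m22 k2 = m21 k2) :
    max (∫ x : ℝ, p1 x * (x + max (m11 x) (m12 x)))
        (∫ x : ℝ, p2 x * (x + max (m22 x) (m21 x))) =
      max (θ1 + ((∫ x in Set.Iic k1, p1 x * m12 x) + ∫ x in Set.Ici k1, p1 x * m11 x))
          (θ2 + ((∫ x in Set.Iic k2, p2 x * m21 x) + ∫ x in Set.Ici k2, p2 x * m22 x)) := by
  have hv1 : 0 < σ1sq + σ0sq := by linarith
  have hv2 : 0 < σ2sq + σ0sq := by linarith
  subst hp1 hp2 hm11 hm12 hm22 hm21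
  congr 1
  · exact integral_gpdf_mul_add_max (v := ⟨_, hv1.le⟩) (ne_of_gt hv1)
      (integrable_add_mul_sub_div (integrable_id_gaussianReal _ _) ..)
      (integrable_add_mul_sub_div (integrable_id_gaussianReal _ _) ..)
      (monotone_add_mul_sub_div_sub hv1 hs1.le) hk1
  · exact integral_gpdf_mul_add_max (v := ⟨_, hv2.le⟩) (ne_of_gt hv2)
      (integrable_add_mul_sub_div (integrable_id_gaussianReal _ _) ..)
      (integrable_add_mul_sub_div (integrable_id_gaussianReal _ _) ..)
      (monotone_add_mul_sub_div_sub hv2 hs2.le) hk2
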